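/- arXiv:1903.04684 — 6 statements merged into one kernel-verified Lean document; each statement's English description precedes it below -/
import Mathlib

section
/- Let n = n0 + n1 and let the data (X_1,Y_1),…,(X_n,Y_n),(X_{n+1},Y_{n+1}) be i.i.d. from an arbitrary distribution P on ℝ^d × ℝ. Let μ̂ be any measurable function of the first n0 data points (a fitted regression function), let R_i = |Y_i − μ̂(X_i)| for i = n0+1,…,n, and let q̂ be the ⌈(1−α)(n1+1)⌉-th smallest value of R_{n0+1},…,R_n (defined as +∞ if ⌈(1−α)(n1+1)⌉ > n1). Define the split conformal interval Ĉ_n(x) = [μ̂(x) − q̂, μ̂(x) + q̂]. Then P(Y_{n+1} ∈ Ĉ_n(X_{n+1})) ≥ 1 − α. -/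
open MeasureTheory
open scoped ENNReal

noncomputable section

open Classical in
/-- The `k`-th smallest of the values `R i`, `i ∈ s`, valued in `ℝ≥0∞`;
equals `⊤` when `k` exceeds `s.card`. -/
def kthSmallest {ι : Type*} (s : Finset ι) (R : ι → ℝ≥0∞) (k : ℕ) : ℝ≥0∞ :=
  sInf {t : ℝ≥0∞ | k ≤ (s.filter fun i => R i ≤ t).card}

/-!
Given the training points, the `n1` calibration residuals and the test residual are
exchangeable, so the test residual is equally likely to occupy each of the `n1 + 1` positions.
Whatever the residuals, at least `k` of them have fewer than `k` residuals strictly below them;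
hence the test residual has fewer than `k` calibration residuals below it, and so lies below
their `k`-th smallest, with probability at least `k / (n1 + 1) ≥ 1 - α` for
`k = ⌈(1 - α)(n1 + 1)⌉`.
-/

open Finset

theorem le_kthSmallest_of_card_lt {ι : Type*} (s : Finset ι) (R : ι → ℝ≥0∞) {k : ℕ}
    {z : ℝ≥0∞} (h : #{i ∈ s | R i < z} < k) : z ≤ kthSmallest s R k := by
  classical
  refine le_sInf fun t ht => le_of_not_gt fun htz => ?_
  have hsub : #{i ∈ s | R i ≤ t} ≤ #{i ∈ s | R i < z} :=
    card_le_card <| monotone_filter_right s fun _ _ hi => hi.trans_lt htz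
  have ht : k ≤ #{i ∈ s | R i ≤ t} := ht
  omega

theorem le_card_filter_card_filter_lt_lt {ι α : Type*} [DecidableEq ι] [LinearOrder α]
    (R : ι → α) (J : Finset ι) {k : ℕ} (hk : k ≤ #J) :
    k ≤ #{j ∈ J | #{i ∈ J | R i < R j} < k} := by
  induction J using Finset.induction_on_max_value R with
  | empty => simpa using hk
  | insert a J ha hmax ih =>
    rw [card_insert_of_notMem ha] at hk
    rcases Nat.lt_or_eq_of_le hk with hk | rfl
    · refine (ih (by omega)).trans (card_le_card fun j hj => ?_)
      rw [mem_filter] at hj ⊢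
      refine ⟨mem_insert_of_mem hj.1, ?_⟩
      rw [filter_insert, if_neg (not_lt.2 (hmax j hj.1))]
      exact hj.2
    · rw [filter_true_of_mem fun j hj => ?_, card_insert_of_notMem ha]
      rw [← card_insert_of_notMem ha]
      exact card_lt_card (filter_ssubset.2 ⟨j, hj, lt_irrefl _⟩)

open Classical in
theorem natCast_mul_measure_univ_le_sum {Ω ι : Type*} [MeasurableSpace Ω] (μ : Measure Ω)
    (J : Finset ι) {E : ι → Set Ω} (hE : ∀ j ∈ J, MeasurableSet (E j)) {k : ℕ}
    (h : ∀ ω, k ≤ #{j ∈ J | ω ∈ E j}) :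
    k * μ Set.univ ≤ ∑ j ∈ J, μ (E j) := by
  calc (k : ℝ≥0∞) * μ Set.univ = ∫⁻ _, (k : ℝ≥0∞) ∂μ := (lintegral_const _).symm
    _ ≤ ∫⁻ ω, ∑ j ∈ J, (E j).indicator 1 ω ∂μ := lintegral_mono fun ω => by
      simp only [Set.indicator_apply, Pi.one_apply, sum_boole]
      exact_mod_cast h ω
    _ = ∑ j ∈ J, μ (E j) := by
      rw [lintegral_finsetSum _ fun j hj => measurable_one.indicator (hE j hj)]
      exact sum_congr rfl fun j hj => lintegral_indicator_one (hE j hj)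

theorem measurePreserving_comp_perm {ι β : Type*} [Fintype ι] [MeasurableSpace β]
    (P : Measure β) [SigmaFinite P] (σ : Equiv.Perm ι) :
    MeasurePreserving (fun x : ι → β => x ∘ σ)
      (Measure.pi fun _ => P) (Measure.pi fun _ => P) := by
  convert measurePreserving_piCongrLeft (fun _ : ι => P) σ.symm using 1
  ext x j
  simpa using (MeasurableEquiv.piCongrLeft_apply_apply (β := fun _ : ι => β) σ.symm x (σ j)).symm

theorem Equiv.Perm.apply_mem_iff_of_forall_notMem {ι : Type*} {J : Set ι} {σ : Equiv.Perm ι}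
    (hσ : ∀ i ∉ J, σ i = i) {i : ι} : σ i ∈ J ↔ i ∈ J := by
  refine ⟨fun h => by_contra fun hi => hi (hσ i hi ▸ h), fun hi => by_contra fun h => ?_⟩
  exact h (by rwa [σ.injective (hσ _ h)])

/-- Exchangeability of the scores indexed by `J` makes all ranks equally likely. -/
theorem card_div_card_le_measure_card_filter_lt {ι β γ : Type*} [Fintype ι] [DecidableEq ι]
    [MeasurableSpace β] [LinearOrder γ] (P : Measure β) [IsProbabilityMeasure P]
    (J : Finset ι) (score : (ι → β) → ι → γ)
    (hscore : ∀ σ : Equiv.Perm ι, (∀ i ∉ J, σ i = i) → ∀ x i, score (x ∘ σ) i = score x (σ i))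
    (hmeas : ∀ i j, MeasurableSet {x | score x i < score x j}) {k : ℕ} (hk : k ≤ #J) {j : ι}
    (hj : j ∈ J) :
    (k : ℝ≥0∞) / #J ≤ Measure.pi (fun _ => P) {x | #{i ∈ J | score x i < score x j} < k} := by
  set μ := Measure.pi fun _ : ι => P
  set E : ι → Set (ι → β) := fun j => {x | #{i ∈ J | score x i < score x j} < k}
  have hE : ∀ j, MeasurableSet (E j) := fun j => by
    -- `E j` is determined by the finitely many Booleans `score x i < score x j`.
    have hdec : Measurable fun x i => decide (score x i < score x j) :=
      measurable_pi_lambda _ fun i => measurable_to_bool <| by simpa [Set.preimage] using hmeas i j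
    convert hdec (MeasurableSet.of_discrete (s := {b : ι → Bool | #{i ∈ J | b i} < k})) using 1
    ext x
    simp [E]
  have hswap : ∀ j' ∈ J, μ (E j') = μ (E j) := fun j' hj' => by
    set σ := Equiv.swap j j'
    have hσ : ∀ i ∉ J, σ i = i := fun i hi =>
      Equiv.swap_apply_of_ne_of_ne (ne_of_mem_of_not_mem hj hi).symm
        (ne_of_mem_of_not_mem hj' hi).symm
    have hpre : (fun x => x ∘ σ) ⁻¹' E j = E j' := by
      ext x
      have hcard : #{i ∈ J | score x (σ i) < score x j'} = #{i ∈ J | score x i < score x j'} :=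
        card_equiv σ fun i => by
          have hσJ : σ i ∈ J ↔ i ∈ J :=
            Equiv.Perm.apply_mem_iff_of_forall_notMem (J := (J : Set ι)) hσ
          simp only [mem_filter, hσJ]
      have hσj : σ j = j' := Equiv.swap_apply_left j j'
      simp only [E, Set.mem_preimage, Set.mem_ofPred_eq, hscore σ hσ, hσj, hcard]
    rw [← hpre, (measurePreserving_comp_perm P σ).measure_preimage (hE j).nullMeasurableSet]
  have hsum := natCast_mul_measure_univ_le_sum μ J (fun j _ => hE j)
    (fun x => by convert le_card_filter_card_filter_lt_lt (score x) J hk using 3; exact Iff.rfl)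
  rw [sum_congr rfl hswap, sum_const, nsmul_eq_mul, measure_univ, mul_one] at hsum
  exact ENNReal.div_le_of_le_mul' hsum

section SplitConformal

variable {X : Type*} {n0 n1 : ℕ}

def trainingData (data : Fin (n0 + n1 + 1) → X × ℝ) : Fin n0 → X × ℝ :=
  fun j => data (Fin.castLE (Nat.le_add_right_of_le (Nat.le_add_right n0 n1)) j)

/-- The residual `|Yᵢ - μ̂(Xᵢ)|`, with `μ̂` fitted on the training data. -/
def splitResidual (μhat : (Fin n0 → X × ℝ) → X → ℝ) (data : Fin (n0 + n1 + 1) → X × ℝ)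
    (i : Fin (n0 + n1 + 1)) : ℝ≥0∞ :=
  ENNReal.ofReal |(data i).2 - μhat (trainingData data) (data i).1|

theorem trainingData_comp_perm {σ : Equiv.Perm (Fin (n0 + n1 + 1))}
    (hσ : ∀ i : Fin (n0 + n1 + 1), (i : ℕ) < n0 → σ i = i) (data : Fin (n0 + n1 + 1) → X × ℝ) :
    trainingData (data ∘ σ) = trainingData data :=
  funext fun j => congrArg data (hσ _ j.isLt)

theorem measurable_trainingData [MeasurableSpace X] :
    Measurable (trainingData : (Fin (n0 + n1 + 1) → X × ℝ) → Fin n0 → X × ℝ) :=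
  measurable_pi_lambda _ fun _ => measurable_pi_apply _

theorem splitResidual_comp_perm (μhat : (Fin n0 → X × ℝ) → X → ℝ)
    {σ : Equiv.Perm (Fin (n0 + n1 + 1))} (hσ : ∀ i : Fin (n0 + n1 + 1), (i : ℕ) < n0 → σ i = i)
    (data : Fin (n0 + n1 + 1) → X × ℝ) (i : Fin (n0 + n1 + 1)) :
    splitResidual μhat (data ∘ σ) i = splitResidual μhat data (σ i) := by
  simp only [splitResidual, trainingData_comp_perm hσ, Function.comp_apply]

theorem measurable_splitResidual [MeasurableSpace X] {μhat : (Fin n0 → X × ℝ) → X → ℝ}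
    (hμhat : Measurable fun p : (Fin n0 → X × ℝ) × X => μhat p.1 p.2) (i : Fin (n0 + n1 + 1)) :
    Measurable fun data : Fin (n0 + n1 + 1) → X × ℝ => splitResidual μhat data i := by
  have hfit : Measurable fun data : Fin (n0 + n1 + 1) → X × ℝ =>
      μhat (trainingData data) (data i).1 :=
    hμhat.comp (measurable_trainingData.prodMk (measurable_pi_apply i).fst)
  exact ENNReal.measurable_ofReal.comp ((measurable_pi_apply i).snd.sub hfit).abs

theorem splitResidual_last_le_kthSmallest (μhat : (Fin n0 → X × ℝ) → X → ℝ)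
    (data : Fin (n0 + n1 + 1) → X × ℝ) {k : ℕ}
    (h : #{i ∈ Ici (⟨n0, by omega⟩ : Fin (n0 + n1 + 1)) |
      splitResidual μhat data i < splitResidual μhat data (Fin.last _)} < k) :
    splitResidual μhat data (Fin.last _) ≤
      kthSmallest univ (fun i : Fin n1 => splitResidual μhat data (Fin.natAdd n0 i).castSucc)
        k := by
  refine le_kthSmallest_of_card_lt _ _ (lt_of_le_of_lt ?_ h)
  refine card_le_card_of_injOn (fun i => (Fin.natAdd n0 i).castSucc) (fun i hi => ?_) ?_
  · simp only [coe_filter, mem_univ, true_and, Set.mem_ofPred_eq] at hi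
    simpa [Fin.le_def] using hi
  · intro a _ b _ hab
    simpa using hab

end SplitConformal

/-- **Split conformal prediction has distribution-free marginal coverage.**
Data `(X_1,Y_1),…,(X_{n+1},Y_{n+1})` (with `n = n0 + n1`) are i.i.d. from `P`; `μ̂` is fitted
on the first `n0` points; `q̂` is the `⌈(1-α)(n1+1)⌉`-th smallest holdout residual (`+∞` if the
index exceeds `n1`); then `Y_{n+1} ∈ [μ̂(X_{n+1}) - q̂, μ̂(X_{n+1}) + q̂]` with probability
at least `1 - α`. -/
theorem split_conformal_marginal_coverage (d n0 n1 : ℕ) (α : ℝ) (hα : α ∈ Set.Ioo (0 : ℝ) 1)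
    (P : Measure ((Fin d → ℝ) × ℝ)) [IsProbabilityMeasure P]
    (μhat : (Fin n0 → (Fin d → ℝ) × ℝ) → (Fin d → ℝ) → ℝ)
    (hμhat : Measurable fun p : (Fin n0 → (Fin d → ℝ) × ℝ) × (Fin d → ℝ) => μhat p.1 p.2) :
    ENNReal.ofReal (1 - α) ≤
      (Measure.pi fun _ : Fin (n0 + n1 + 1) => P)
        {data |
          ENNReal.ofReal
              |(data (Fin.last (n0 + n1))).2 -
                μhat (fun i => data (Fin.castLE (by omega) i)) (data (Fin.last (n0 + n1))).1| ≤
            kthSmallest (Finset.univ : Finset (Fin n1))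
              (fun i =>
                ENNReal.ofReal
                  |(data ((Fin.natAdd n0 i).castSucc)).2 -
                    μhat (fun j => data (Fin.castLE (by omega) j))
                      (data ((Fin.natAdd n0 i).castSucc)).1|)
              ⌈(1 - α) * ((n1 : ℝ) + 1)⌉₊} := by
  set k := ⌈(1 - α) * ((n1 : ℝ) + 1)⌉₊
  set J := Ici (⟨n0, by omega⟩ : Fin (n0 + n1 + 1))
  have hJ : #J = n1 + 1 := by simp only [Fin.card_Ici, J]; omega
  have hk : k ≤ #J := Nat.ceil_le.2 <| by
    rw [hJ]; push_cast; nlinarith [hα.1]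
  have hrank := card_div_card_le_measure_card_filter_lt P J (splitResidual μhat)
    (fun σ hσ => splitResidual_comp_perm μhat fun i hi => hσ i (by simpa [J, Fin.le_def] using hi))
    (fun i j => measurableSet_lt (measurable_splitResidual hμhat i)
      (measurable_splitResidual hμhat j))
    hk (j := Fin.last _) (by simp [J, Fin.le_def])
  calc ENNReal.ofReal (1 - α) ≤ (k : ℝ≥0∞) / #J := by
        rw [hJ, ← ENNReal.ofReal_natCast, ← ENNReal.ofReal_natCast,
          ← ENNReal.ofReal_div_of_pos (by positivity)]
        refine ENNReal.ofReal_le_ofReal ((le_div_iff₀ (by positivity)).2 ?_)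
        push_cast
        exact Nat.le_ceil _
    _ ≤ _ := hrank
    _ ≤ _ := measure_mono fun data => splitResidual_last_le_kthSmallest μhat data
end
end

section
/- Let R_1,…,R_m,R_{m+1} be exchangeable real-valued random variables and let 1 ≤ k ≤ m. Then the probability that R_{m+1} is at most the k-th smallest value of R_1,…,R_m is at least k/(m+1). -/
/-!
The event `R_{m+1} ≤ (k-th smallest of R_1, …, R_m)` says exactly that fewer than `k` of the
`R_i` lie strictly below `R_{m+1}`, i.e. that the strict rank of `R_{m+1}` among all `m + 1`
values is `< k`. In every configuration at least `k` of the `m + 1` values have strict rank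
`< k` (a smallest value outside that set would have only members of the set below it), so the
probabilities of the events `{rank of R_j < k}` sum to at least `k`; by exchangeability they
are all equal.
-/

open MeasureTheory
open scoped ENNReal

noncomputable section

open Classical in
/-- The `k`-th smallest of the values `R i`, `i ∈ s` (the `k`-th order statistic);
junk value if `k = 0` or `k > s.card`. -/
def kthSmallestReal {ι : Type*} (s : Finset ι) (R : ι → ℝ) (k : ℕ) : ℝ :=
  sInf {t : ℝ | k ≤ (s.filter fun i => R i ≤ t).card}

open Finset

section StrictRank

variable {ι α : Type*} [Fintype ι] [LinearOrder α]

def strictRank (x : ι → α) (j : ι) : ℕ := #{i | x i < x j}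

lemma strictRank_comp_perm (x : ι → α) (σ : Equiv.Perm ι) (j : ι) :
    strictRank (x ∘ σ) j = strictRank x (σ j) :=
  card_equiv σ (by simp)

lemma le_card_strictRank_lt (x : ι → α) {k : ℕ} (hk : k ≤ Fintype.card ι) :
    k ≤ #{j | strictRank x j < k} := by
  by_contra! hS
  have hne : ({j | ¬ strictRank x j < k} : Finset ι).Nonempty := by
    have := card_filter_add_card_filter_not (s := univ) (fun j => strictRank x j < k)
    rw [card_univ] at this
    exact card_pos.mp (by omega)
  obtain ⟨j, hj_high, hj_min⟩ := exists_min_image _ x hne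
  have hbelow : ({i | x i < x j} : Finset ι) ⊆ ({j | strictRank x j < k} : Finset ι) := by
    intro i hi
    by_contra hi_high
    exact (hj_min i (by simpa using hi_high)).not_gt (by simpa using hi)
  exact (mem_filter.mp hj_high).2 ((card_le_card hbelow).trans_lt hS)

lemma strictRank_last {m : ℕ} (x : Fin (m + 1) → α) :
    strictRank x (Fin.last m) = #{i : Fin m | x i.castSucc < x (Fin.last m)} := by
  rw [strictRank, card_filter, card_filter, Fin.sum_univ_castSucc]
  simp

lemma measurable_strictRank [TopologicalSpace α] [OrderClosedTopology α]
    [SecondCountableTopology α] [MeasurableSpace α] [OpensMeasurableSpace α] (j : ι) :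
    Measurable fun x : ι → α => strictRank x j := by
  simp only [strictRank, card_filter]
  refine Finset.measurable_sum _ fun i _ => Measurable.ite ?_ measurable_const measurable_const
  exact measurableSet_lt (measurable_pi_apply i) (measurable_pi_apply j)

end StrictRank

lemma le_kthSmallestReal_iff {ι : Type*} {s : Finset ι} {R : ι → ℝ} {k : ℕ}
    (hk1 : 1 ≤ k) (hks : k ≤ #s) (v : ℝ) :
    v ≤ kthSmallestReal s R k ↔ #{i ∈ s | R i < v} < k := by
  have hs : s.Nonempty := card_pos.mp (by omega)
  set T := {t : ℝ | k ≤ #{i ∈ s | R i ≤ t}}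
  have hT_ne : T.Nonempty := ⟨s.sup' hs R, by
    rw [Set.mem_ofPred_eq, filter_true_of_mem fun i hi => le_sup' R hi]
    exact hks⟩
  have hT_bdd : BddBelow T := ⟨s.inf' hs R, fun t ht => by
    obtain ⟨i, hi⟩ := card_pos.mp (lt_of_lt_of_le hk1 ht)
    exact (inf'_le R (mem_filter.mp hi).1).trans (mem_filter.mp hi).2⟩
  rw [kthSmallestReal, le_csInf_iff hT_bdd hT_ne]
  constructor
  · intro h
    by_contra! hv
    obtain ⟨j, hj, hj_max⟩ := exists_max_image {i ∈ s | R i < v} R (card_pos.mp (by omega))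
    have hjT : R j ∈ T := hv.trans (card_le_card fun i hi => by
      simp only [mem_filter] at hi ⊢
      exact ⟨hi.1, hj_max i (mem_filter.mpr hi)⟩)
    exact (h (R j) hjT).not_gt (mem_filter.mp hj).2
  · intro h t (ht : k ≤ #{i ∈ s | R i ≤ t})
    by_contra! htv
    have hsub : {i ∈ s | R i ≤ t} ⊆ {i ∈ s | R i < v} := fun i hi => by
      simp only [mem_filter] at hi ⊢
      exact ⟨hi.1, hi.2.trans_lt htv⟩
    exact (ht.trans (card_le_card hsub)).not_gt h

section Exchangeable

open Classical in
lemma le_sum_measure_of_le_card_mem {β ι : Type*} [MeasurableSpace β] [Fintype ι]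
    (ν : Measure β) [IsProbabilityMeasure ν] {A : ι → Set β} (hA : ∀ j, MeasurableSet (A j))
    {k : ℕ} (hk : ∀ x, k ≤ #{j | x ∈ A j}) :
    (k : ℝ≥0∞) ≤ ∑ j, ν (A j) := by
  calc (k : ℝ≥0∞) = ∫⁻ _, (k : ℝ≥0∞) ∂ν := by simp
    _ ≤ ∫⁻ x, ∑ j, (A j).indicator 1 x ∂ν := lintegral_mono fun x => by
        simpa [Set.indicator_apply] using hk x
    _ = ∑ j, ν (A j) := by
        rw [lintegral_finsetSum _ fun j _ => measurable_one.indicator (hA j)]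
        simp only [lintegral_indicator_one (hA _)]

variable {ι α : Type*} [Fintype ι] [DecidableEq ι] [LinearOrder α] [TopologicalSpace α]
  [OrderClosedTopology α] [SecondCountableTopology α] [MeasurableSpace α] [OpensMeasurableSpace α]
  {ν : Measure (ι → α)}

lemma measure_strictRank_lt_eq_of_map_perm
    (hν : ∀ σ : Equiv.Perm ι, ν.map (fun x => x ∘ σ) = ν) (k : ℕ) (i j : ι) :
    ν {x | strictRank x i < k} = ν {x | strictRank x j < k} := by
  have hswap : Measurable fun x : ι → α => x ∘ Equiv.swap i j := by fun_prop
  have hpre : (fun x : ι → α => x ∘ Equiv.swap i j) ⁻¹' {x | strictRank x j < k}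
      = {x | strictRank x i < k} := by
    ext x
    simp [strictRank_comp_perm]
  rw [← hpre, ← Measure.map_apply hswap (measurableSet_lt (measurable_strictRank j)
    measurable_const), hν]

lemma le_card_mul_measure_strictRank_lt [IsProbabilityMeasure ν]
    (hν : ∀ σ : Equiv.Perm ι, ν.map (fun x => x ∘ σ) = ν) {k : ℕ} (hk : k ≤ Fintype.card ι)
    (j : ι) :
    (k : ℝ≥0∞) ≤ Fintype.card ι * ν {x | strictRank x j < k} := by
  calc (k : ℝ≥0∞) ≤ ∑ i, ν {x | strictRank x i < k} :=
        le_sum_measure_of_le_card_mem ν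
          (fun i => measurableSet_lt (measurable_strictRank i) measurable_const)
          fun x => by simpa using le_card_strictRank_lt x hk
    _ = Fintype.card ι * ν {x | strictRank x j < k} := by
        simp [measure_strictRank_lt_eq_of_map_perm hν k _ j]

end Exchangeable

/-- **Exchangeability and order statistics:** if `R_1, …, R_{m+1}` are exchangeable real
random variables and `1 ≤ k ≤ m`, then the probability that `R_{m+1}` is at most the `k`-th
smallest of `R_1, …, R_m` is at least `k / (m+1)`. -/
theorem exchangeable_order_statistic (m k : ℕ) (hk1 : 1 ≤ k) (hkm : k ≤ m)
    (Ω : Type) [MeasurableSpace Ω] (μ : Measure Ω) [IsProbabilityMeasure μ]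
    (R : Fin (m + 1) → Ω → ℝ) (hR : ∀ i, Measurable (R i))
    (hexch : ∀ σ : Equiv.Perm (Fin (m + 1)),
      μ.map (fun ω => fun i => R (σ i) ω) = μ.map (fun ω => fun i => R i ω)) :
    (k : ℝ≥0∞) / ((m : ℝ≥0∞) + 1) ≤
      μ {ω | R (Fin.last m) ω ≤
        kthSmallestReal (Finset.univ : Finset (Fin m)) (fun i => R i.castSucc ω) k} := by
  set X : Ω → Fin (m + 1) → ℝ := fun ω i => R i ω
  have hX : Measurable X := measurable_pi_lambda _ hR
  have hX_exch (σ : Equiv.Perm (Fin (m + 1))) : (μ.map X).map (fun x => x ∘ σ) = μ.map X := by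
    rw [Measure.map_map (by fun_prop) hX]
    exact hexch σ
  have hevent : {ω | R (Fin.last m) ω ≤
      kthSmallestReal (univ : Finset (Fin m)) (fun i => R i.castSucc ω) k}
      = X ⁻¹' {x | strictRank x (Fin.last m) < k} := by
    have hkm' : k ≤ #(univ : Finset (Fin m)) := by simpa using hkm
    ext ω
    simp [le_kthSmallestReal_iff hk1 hkm', strictRank_last, X]
  have := Measure.isProbabilityMeasure_map (μ := μ) hX.aemeasurable
  have hk_card : k ≤ Fintype.card (Fin (m + 1)) := by rw [Fintype.card_fin]; omega
  have hbound := le_card_mul_measure_strictRank_lt hX_exch hk_card (Fin.last m)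
  rw [hevent, ← Measure.map_apply hX (measurableSet_lt (measurable_strictRank _) measurable_const),
    ENNReal.div_le_iff_le_mul (by simp) (by simp), mul_comm]
  simpa using hbound
end
end

section
/- Suppose a prediction-interval algorithm Ĉ_n satisfies (1−α)-CC with α < 1. Then for every distribution P on ℝ^d × ℝ, at P_X-almost all points x that are not atoms of P_X, the expected Lebesgue measure of Ĉ_n(x) is infinite: E[leb(Ĉ_n(x))] = ∞. -/
/-!
Suppose the expected length is at most `B` on a set `𝒳` of `P_X`-measure `p > 0`. Let `P'` agree
with `P` off `{X ∈ 𝒳}` and, on `{X ∈ 𝒳}`, keep the law of `X` but draw `Y` uniformly from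
`(0, k]`, independently of `X`. Conditional coverage under `P'` on `𝒳` says that `Y_{n+1}` lands in
`Ĉ_n(X_{n+1})` with probability at least `(1 - α) p`. Unless one of the `n` training points falls
in `{X ∈ 𝒳}`, which has probability at most `n p`, the training sample has the same law as under
`P`, and then a uniform response on an interval of length `k` is covered with probability at
most `B / k`. Hence `1 - α ≤ B / k + n p` for every `k`, so `1 - α ≤ n p`. Small balls around a
non-atom have small positive measure, so the non-atoms where the expected length is at most `B`
form a null set.
-/

open MeasureTheory
open scoped ENNReal

noncomputable section

/-- A data point: a feature vector in `ℝ^d` together with a real response. -/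
abbrev Pt (d : ℕ) : Type := (Fin d → ℝ) × ℝ

/-- A prediction-interval algorithm: maps the training data, auxiliary randomness, and a
feature point to a subset of `ℝ`. -/
abbrev PredAlg (d n : ℕ) (Ω : Type) : Type :=
  (Fin n → Pt d) → Ω → (Fin d → ℝ) → Set ℝ

/-- Joint law of `n+1` i.i.d. data points from `P` together with independent auxiliary
randomness drawn from `μΩ`. -/
def joint (d n : ℕ) (P : Measure (Pt d)) {Ω : Type} [MeasurableSpace Ω] (μΩ : Measure Ω)
    [SFinite μΩ] : Measure ((Fin (n + 1) → Pt d) × Ω) :=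
  (Measure.pi fun _ : Fin (n + 1) => P).prod μΩ

/-- The coverage event `Y_{n+1} ∈ Ĉ_n(X_{n+1})`, where the first `n` data points are the
training data and the last one is the test point. -/
def covEvent {d n : ℕ} {Ω : Type} (C : PredAlg d n Ω) : Set ((Fin (n + 1) → Pt d) × Ω) :=
  {q | (q.1 (Fin.last n)).2 ∈ C (fun i => q.1 i.castSucc) q.2 (q.1 (Fin.last n)).1}

/-- The event `X_{n+1} ∈ 𝒳`. -/
def testEvent (d n : ℕ) (Ω : Type) (𝒳 : Set (Fin d → ℝ)) : Set ((Fin (n + 1) → Pt d) × Ω) :=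
  {q | (q.1 (Fin.last n)).1 ∈ 𝒳}

/-- Distribution-free marginal coverage at level `t` (`(1-β)`-MC means `MC _ _ _ _ (1-β)`):
for every distribution `P`, the probability of coverage is at least `t`. -/
def MC (d n : ℕ) {Ω : Type} [MeasurableSpace Ω] (μΩ : Measure Ω) [SFinite μΩ]
    (C : PredAlg d n Ω) (t : ℝ) : Prop :=
  ∀ P : Measure (Pt d), IsProbabilityMeasure P →
    ENNReal.ofReal t ≤ joint d n P μΩ (covEvent C)

/-- Distribution-free approximate conditional coverage at level `1 - α` and tolerance `δ`:
for every distribution `P` and every measurable `𝒳` with `P_X(𝒳) ≥ δ`,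
`P(Y_{n+1} ∈ Ĉ_n(X_{n+1}) ∧ X_{n+1} ∈ 𝒳) ≥ (1-α) ⬝ P(X_{n+1} ∈ 𝒳)`, i.e. the conditional
coverage probability given `X_{n+1} ∈ 𝒳` is at least `1 - α`. -/
def ACC (d n : ℕ) {Ω : Type} [MeasurableSpace Ω] (μΩ : Measure Ω) [SFinite μΩ]
    (C : PredAlg d n Ω) (α δ : ℝ) : Prop :=
  ∀ P : Measure (Pt d), IsProbabilityMeasure P →
    ∀ 𝒳 : Set (Fin d → ℝ), MeasurableSet 𝒳 → ENNReal.ofReal δ ≤ P {q | q.1 ∈ 𝒳} →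
      ENNReal.ofReal (1 - α) * joint d n P μΩ (testEvent d n Ω 𝒳) ≤
        joint d n P μΩ (covEvent C ∩ testEvent d n Ω 𝒳)


/-- Distribution-free conditional coverage at level `1 - α`: for every distribution `P`,
the conditional probability of coverage given `X_{n+1} ∈ 𝒳` is at least `1 - α` for every
measurable `𝒳` (this is the standard measure-theoretic rendering of
`P(Y_{n+1} ∈ Ĉ_n(X_{n+1}) | X_{n+1} = x) ≥ 1 - α` for `P_X`-almost every `x`). -/
def CC (d n : ℕ) {Ω : Type} [MeasurableSpace Ω] (μΩ : Measure Ω) [SFinite μΩ]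
    (C : PredAlg d n Ω) (α : ℝ) : Prop :=
  ∀ P : Measure (Pt d), IsProbabilityMeasure P →
    ∀ 𝒳 : Set (Fin d → ℝ), MeasurableSet 𝒳 →
      ENNReal.ofReal (1 - α) * joint d n P μΩ (testEvent d n Ω 𝒳) ≤
        joint d n P μΩ (covEvent C ∩ testEvent d n Ω 𝒳)

open Filter Topology Set ProbabilityTheory

section Nonatoms

variable {X : Type*} [MetricSpace X] [MeasurableSpace X] [OpensMeasurableSpace X]
  {μ : Measure X} [IsFiniteMeasure μ]

lemma tendsto_measure_ball_nhdsGT_zero {x : X} (hx : μ {x} = 0) :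
    Tendsto (fun r => μ (Metric.ball x r)) (𝓝[>] 0) (𝓝 0) := by
  have h := tendsto_measure_biInter_gt (μ := μ) (s := Metric.ball x) (a := 0)
    (fun r _ => measurableSet_ball.nullMeasurableSet)
    (fun _ _ _ hij => Metric.ball_subset_ball hij) ⟨1, one_pos, measure_ne_top μ _⟩
  rwa [Metric.biInter_gt_ball, Metric.closedBall_zero, hx] at h

lemma measure_setOf_measure_singleton_eq_zero_of_forall_measure_lt [SecondCountableTopology X]
    {T : Set X} (hT : MeasurableSet T) {ε : ℝ≥0∞} (hε : 0 < ε)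
    (h : ∀ s ⊆ T, MeasurableSet s → μ s < ε → μ s = 0) :
    μ {x ∈ T | μ {x} = 0} = 0 := by
  by_contra hA
  obtain ⟨x, ⟨-, hx⟩, hpos⟩ := exists_mem_forall_mem_nhdsWithin_pos_measure hA
  obtain ⟨r, hlt, hr⟩ :=
    (((tendsto_measure_ball_nhdsGT_zero hx).eventually (gt_mem_nhds hε)).and
      self_mem_nhdsWithin).exists
  have hball : μ (T ∩ Metric.ball x r) = 0 :=
    h _ inter_subset_left (hT.inter measurableSet_ball)
      ((measure_mono inter_subset_right).trans_lt hlt)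
  have := hpos _ (inter_mem_nhdsWithin _ (Metric.ball_mem_nhds x hr))
  exact this.ne' (measure_mono_null (inter_subset_inter_left _ fun y hy => hy.1) hball)

end Nonatoms

lemma lintegral_le_lintegral_add_of_restrict_eq {β : Type*} [MeasurableSpace β]
    {ρ ρ' : Measure β} {W : Set β} (hW : MeasurableSet W) (h : ρ'.restrict W = ρ.restrict W)
    {f : β → ℝ≥0∞} {c : ℝ≥0∞} (hf : ∀ b, f b ≤ c) :
    ∫⁻ b, f b ∂ρ' ≤ ∫⁻ b, f b ∂ρ + c * ρ' Wᶜ :=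
  calc ∫⁻ b, f b ∂ρ' = ∫⁻ b in W, f b ∂ρ' + ∫⁻ b in Wᶜ, f b ∂ρ' :=
        (lintegral_add_compl f hW).symm
    _ ≤ ∫⁻ b, f b ∂ρ + ∫⁻ _ in Wᶜ, c ∂ρ' := by
        rw [h]; exact add_le_add (setLIntegral_le_lintegral W f) (lintegral_mono hf)
    _ = ∫⁻ b, f b ∂ρ + c * ρ' Wᶜ := by rw [setLIntegral_const]

section Pi

variable {α : Type*} [MeasurableSpace α]

lemma pi_compl_univ_pi_compl_le (κ : Measure α) [IsProbabilityMeasure κ] (n : ℕ) {S : Set α}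
    (hS : MeasurableSet S) :
    (Measure.pi fun _ : Fin n => κ) (univ.pi fun _ => Sᶜ)ᶜ ≤ n * κ S := by
  have hunion : (univ.pi fun _ : Fin n => Sᶜ)ᶜ = ⋃ i, Function.eval i ⁻¹' S := by
    ext f; simp
  calc (Measure.pi fun _ : Fin n => κ) (univ.pi fun _ => Sᶜ)ᶜ
      ≤ ∑ i : Fin n, (Measure.pi fun _ : Fin n => κ) (Function.eval i ⁻¹' S) := by
        rw [hunion]; exact measure_iUnion_fintype_le _ _
    _ = n * κ S := by
        simp [(measurePreserving_eval (fun _ : Fin n => κ) _).measure_preimage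
          hS.nullMeasurableSet]

lemma lintegral_pi_prod_le_lintegral_add {Ω : Type*} [MeasurableSpace Ω]
    (κ κ' : Measure α) [SigmaFinite κ] [IsProbabilityMeasure κ'] (μΩ : Measure Ω)
    [IsProbabilityMeasure μΩ] (n : ℕ) {S : Set α} (hS : MeasurableSet S)
    (h : κ'.restrict Sᶜ = κ.restrict Sᶜ) {f : (Fin n → α) × Ω → ℝ≥0∞} {c : ℝ≥0∞}
    (hf : ∀ w, f w ≤ c) :
    ∫⁻ w, f w ∂((Measure.pi fun _ => κ').prod μΩ) ≤
      ∫⁻ w, f w ∂((Measure.pi fun _ => κ).prod μΩ) + c * (n * κ' S) := by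
  have hW : MeasurableSet (univ.pi fun _ : Fin n => Sᶜ) := .univ_pi fun _ => hS.compl
  refine (lintegral_le_lintegral_add_of_restrict_eq (ρ := (Measure.pi fun _ => κ).prod μΩ)
    (measurable_fst hW) ?_ hf).trans ?_
  · rw [← prod_univ, ← Measure.restrict_prod_eq_prod_univ, ← Measure.restrict_prod_eq_prod_univ,
      Measure.restrict_pi_pi, Measure.restrict_pi_pi, h]
  · gcongr
    have hfst := measurePreserving_fst (μ := Measure.pi fun _ : Fin n => κ') (ν := μΩ)
    rw [← preimage_compl, hfst.measure_preimage hW.compl.nullMeasurableSet]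
    exact pi_compl_univ_pi_compl_le κ' n hS

end Pi

section JointLaw

variable {d n : ℕ} {Ω : Type} [MeasurableSpace Ω] {μΩ : Measure Ω} [IsProbabilityMeasure μΩ]
  {C : PredAlg d n Ω} (P : Measure (Pt d)) [IsProbabilityMeasure P]

lemma measurableSet_setOf_mem_predAlg
    (hC : MeasurableSet {p : ((Fin n → Pt d) × Ω × (Fin d → ℝ)) × ℝ |
      p.2 ∈ C p.1.1 p.1.2.1 p.1.2.2})
    {β : Type*} [MeasurableSpace β] {w : β → (Fin n → Pt d) × Ω} {x : β → Fin d → ℝ}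
    {y : β → ℝ} (hw : Measurable w) (hx : Measurable x) (hy : Measurable y) :
    MeasurableSet {b | y b ∈ C (w b).1 (w b).2 (x b)} :=
  hC.preimage (f := fun b => (((w b).1, (w b).2, x b), y b)) (by fun_prop)

lemma measurePreserving_joint :
    MeasurePreserving (fun q : (Fin (n + 1) → Pt d) × Ω => (q.1 (Fin.last n), Fin.init q.1, q.2))
      (joint d n P μΩ) (P.prod ((Measure.pi fun _ : Fin n => P).prod μΩ)) := by
  have := Measure.pi.sigmaFinite fun _ : Fin n => P
  have := Measure.pi.sigmaFinite fun _ : Fin (n + 1) => P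
  have h := (measurePreserving_prodAssoc P (Measure.pi fun _ : Fin n => P) μΩ).comp
    ((measurePreserving_piFinSuccAbove (fun _ => P) (Fin.last n)).prod (.id μΩ))
  rw [joint]
  convert h using 1
  funext q
  simp [MeasurableEquiv.prodAssoc]

lemma joint_testEvent {𝒳 : Set (Fin d → ℝ)} (h𝒳 : MeasurableSet 𝒳) :
    joint d n P μΩ (testEvent d n Ω 𝒳) = P (Prod.fst ⁻¹' 𝒳) :=
  ((measurePreserving_eval (fun _ => P) (Fin.last n)).comp
    (measurePreserving_fst (ν := μΩ))).measure_preimage (measurable_fst h𝒳).nullMeasurableSet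

lemma joint_covEvent_inter_testEvent
    (hC : MeasurableSet {p : ((Fin n → Pt d) × Ω × (Fin d → ℝ)) × ℝ |
      p.2 ∈ C p.1.1 p.1.2.1 p.1.2.2})
    {𝒳 : Set (Fin d → ℝ)} (h𝒳 : MeasurableSet 𝒳) :
    joint d n P μΩ (covEvent C ∩ testEvent d n Ω 𝒳) =
      ∫⁻ w, P {z | z.1 ∈ 𝒳 ∧ z.2 ∈ C w.1 w.2 z.1} ∂((Measure.pi fun _ : Fin n => P).prod μΩ) := by
  have hE : MeasurableSet {p : Pt d × ((Fin n → Pt d) × Ω) |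
      p.1.1 ∈ 𝒳 ∧ p.1.2 ∈ C p.2.1 p.2.2 p.1.1} :=
    (measurable_fst.fst h𝒳).inter
      (measurableSet_setOf_mem_predAlg hC (by fun_prop) (by fun_prop) (by fun_prop))
  have := Measure.pi.sigmaFinite fun _ : Fin n => P
  refine Eq.trans ?_ (Measure.prod_apply_symm hE)
  rw [← (measurePreserving_joint P).measure_preimage hE.nullMeasurableSet]
  congr 1
  ext q
  simp only [covEvent, testEvent, mem_inter_iff, mem_ofPred_eq, mem_preimage, and_comm]
  rfl

end JointLaw

section Perturb

variable {d : ℕ}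

def perturb (P : Measure (Pt d)) (𝒳 : Set (Fin d → ℝ)) (U : Measure ℝ) : Measure (Pt d) :=
  P.restrict (Prod.fst ⁻¹' 𝒳)ᶜ + ((P.map Prod.fst).restrict 𝒳).prod U

variable (P : Measure (Pt d)) {𝒳 : Set (Fin d → ℝ)}
  (h𝒳 : MeasurableSet 𝒳) (U : Measure ℝ) [IsProbabilityMeasure U]
include h𝒳

lemma perturb_restrict_compl :
    (perturb P 𝒳 U).restrict (Prod.fst ⁻¹' 𝒳)ᶜ = P.restrict (Prod.fst ⁻¹' 𝒳)ᶜ := by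
  have hν : (((P.map Prod.fst).restrict 𝒳).prod U) (Prod.fst ⁻¹' 𝒳)ᶜ = 0 := by
    rw [← preimage_compl, ← prod_univ, Measure.prod_prod, Measure.restrict_apply h𝒳.compl,
      compl_inter_self, measure_empty, zero_mul]
  rw [perturb, Measure.restrict_add, Measure.restrict_restrict (measurable_fst h𝒳).compl,
    inter_self, Measure.restrict_eq_zero.mpr hν, add_zero]

lemma perturb_apply_of_subset {E : Set (Pt d)} (hE : MeasurableSet E)
    (hE𝒳 : E ⊆ Prod.fst ⁻¹' 𝒳) :
    perturb P 𝒳 U E = ∫⁻ x in 𝒳, U (Prod.mk x ⁻¹' E) ∂(P.map Prod.fst) := by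
  rw [perturb, Measure.add_apply, Measure.restrict_apply' (measurable_fst h𝒳).compl,
    (disjoint_compl_right_iff_subset.mpr hE𝒳).inter_eq, measure_empty, zero_add,
    Measure.prod_apply hE]

lemma perturb_preimage_fst : perturb P 𝒳 U (Prod.fst ⁻¹' 𝒳) = P (Prod.fst ⁻¹' 𝒳) := by
  rw [perturb_apply_of_subset P h𝒳 U (measurable_fst h𝒳) subset_rfl,
    ← Measure.map_apply measurable_fst h𝒳, ← setLIntegral_one]
  refine setLIntegral_congr_fun h𝒳 fun x hx => ?_
  simp [preimage, hx]

lemma isProbabilityMeasure_perturb [IsProbabilityMeasure P] :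
    IsProbabilityMeasure (perturb P 𝒳 U) := by
  have hS : MeasurableSet (Prod.fst ⁻¹' 𝒳 : Set (Pt d)) := measurable_fst h𝒳
  constructor
  rw [← measure_add_measure_compl hS, perturb_preimage_fst P h𝒳,
    ← Measure.restrict_apply_univ (s := (Prod.fst ⁻¹' 𝒳)ᶜ), perturb_restrict_compl P h𝒳,
    Measure.restrict_apply_univ, measure_add_measure_compl hS, measure_univ]

end Perturb

def expectedLength {d n : ℕ} {Ω : Type} [MeasurableSpace Ω] (P : Measure (Pt d))
    (μΩ : Measure Ω) (C : PredAlg d n Ω) (x : Fin d → ℝ) : ℝ≥0∞ :=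
  ∫⁻ q, volume (C q.1 q.2 x) ∂((Measure.pi fun _ : Fin n => P).prod μΩ)

section Coverage

variable {d n : ℕ} {Ω : Type} [MeasurableSpace Ω] {μΩ : Measure Ω} [IsProbabilityMeasure μΩ]
  {C : PredAlg d n Ω}
  (hC : MeasurableSet {p : ((Fin n → Pt d) × Ω × (Fin d → ℝ)) × ℝ |
      p.2 ∈ C p.1.1 p.1.2.1 p.1.2.2})
include hC

lemma measurable_volume_predAlg :
    Measurable fun p : ((Fin n → Pt d) × Ω) × (Fin d → ℝ) => volume (C p.1.1 p.1.2 p.2) :=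
  measurable_measure_prodMk_left
    (measurableSet_setOf_mem_predAlg hC measurable_fst.fst measurable_fst.snd measurable_snd)

lemma measurable_expectedLength (P : Measure (Pt d)) [SigmaFinite P] :
    Measurable (expectedLength P μΩ C) :=
  have := Measure.pi.sigmaFinite fun _ : Fin n => P
  (measurable_volume_predAlg hC).lintegral_prod_left'

lemma lintegral_setLIntegral_measure_predAlg_le (P : Measure (Pt d)) [SigmaFinite P]
    {𝒳 : Set (Fin d → ℝ)} {B : ℝ≥0∞}
    (hB : ∀ x ∈ 𝒳, expectedLength P μΩ C x ≤ B) (U : Measure ℝ) {c : ℝ≥0∞}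
    (hU : ∀ s, U s ≤ c * volume s) :
    ∫⁻ w, ∫⁻ x in 𝒳, U (C w.1 w.2 x) ∂(P.map Prod.fst)
        ∂((Measure.pi fun _ : Fin n => P).prod μΩ) ≤ c * B * P.map Prod.fst 𝒳 :=
  have := Measure.pi.sigmaFinite fun _ : Fin n => P
  calc _ ≤ ∫⁻ w, ∫⁻ x in 𝒳, c * volume (C w.1 w.2 x) ∂(P.map Prod.fst)
        ∂((Measure.pi fun _ : Fin n => P).prod μΩ) := by
        gcongr with w x; exact hU _
    _ = ∫⁻ x in 𝒳, c * expectedLength P μΩ C x ∂(P.map Prod.fst) := by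
        rw [lintegral_lintegral_swap ((measurable_volume_predAlg hC).const_mul c).aemeasurable]
        refine lintegral_congr fun x => lintegral_const_mul c ?_
        exact (measurable_volume_predAlg hC).comp (measurable_id.prodMk measurable_const)
    _ ≤ ∫⁻ _ in 𝒳, c * B ∂(P.map Prod.fst) :=
        setLIntegral_mono measurable_const fun x hx => by gcongr; exact hB x hx
    _ = c * B * P.map Prod.fst 𝒳 := setLIntegral_const _ _

lemma ofReal_one_sub_mul_le_of_cc {α : ℝ} (hCC : CC d n μΩ C α) (P : Measure (Pt d))
    [IsProbabilityMeasure P] {𝒳 : Set (Fin d → ℝ)} (h𝒳 : MeasurableSet 𝒳) {B : ℝ≥0∞}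
    (hB : ∀ x ∈ 𝒳, expectedLength P μΩ C x ≤ B) (U : Measure ℝ) [IsProbabilityMeasure U]
    {c : ℝ≥0∞} (hU : ∀ s, U s ≤ c * volume s) :
    ENNReal.ofReal (1 - α) * P.map Prod.fst 𝒳 ≤
      (c * B + n * P.map Prod.fst 𝒳) * P.map Prod.fst 𝒳 := by
  set μX := P.map Prod.fst
  set P' := perturb P 𝒳 U
  have := isProbabilityMeasure_perturb P h𝒳 U
  have hS : MeasurableSet (Prod.fst ⁻¹' 𝒳 : Set (Pt d)) := measurable_fst h𝒳
  have hP'S : P' (Prod.fst ⁻¹' 𝒳) = μX 𝒳 := by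
    rw [perturb_preimage_fst P h𝒳 U, Measure.map_apply measurable_fst h𝒳]
  have hslice : ∀ w : (Fin n → Pt d) × Ω,
      P' {z | z.1 ∈ 𝒳 ∧ z.2 ∈ C w.1 w.2 z.1} = ∫⁻ x in 𝒳, U (C w.1 w.2 x) ∂μX := by
    intro w
    have hE : MeasurableSet {z : Pt d | z.1 ∈ 𝒳 ∧ z.2 ∈ C w.1 w.2 z.1} := (measurable_fst h𝒳).inter
      (measurableSet_setOf_mem_predAlg hC measurable_const measurable_fst measurable_snd)
    rw [perturb_apply_of_subset P h𝒳 U hE fun z hz => hz.1]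
    refine setLIntegral_congr_fun h𝒳 fun x hx => ?_
    simp [preimage, hx]
  have hslice_le : ∀ w : (Fin n → Pt d) × Ω, ∫⁻ x in 𝒳, U (C w.1 w.2 x) ∂μX ≤ μX 𝒳 :=
    fun w => (lintegral_mono fun _ => prob_le_one).trans_eq (setLIntegral_one 𝒳)
  calc ENNReal.ofReal (1 - α) * μX 𝒳
      = ENNReal.ofReal (1 - α) * joint d n P' μΩ (testEvent d n Ω 𝒳) := by
        rw [joint_testEvent P' h𝒳, hP'S]
    _ ≤ joint d n P' μΩ (covEvent C ∩ testEvent d n Ω 𝒳) := hCC P' this 𝒳 h𝒳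
    _ = ∫⁻ w, ∫⁻ x in 𝒳, U (C w.1 w.2 x) ∂μX ∂((Measure.pi fun _ : Fin n => P').prod μΩ) := by
        rw [joint_covEvent_inter_testEvent P' hC h𝒳]
        exact lintegral_congr hslice
    _ ≤ ∫⁻ w, ∫⁻ x in 𝒳, U (C w.1 w.2 x) ∂μX ∂((Measure.pi fun _ : Fin n => P).prod μΩ) +
          μX 𝒳 * (n * P' (Prod.fst ⁻¹' 𝒳)) :=
        lintegral_pi_prod_le_lintegral_add P P' μΩ n hS (perturb_restrict_compl P h𝒳 U)
          hslice_le
    _ ≤ c * B * μX 𝒳 + μX 𝒳 * (n * μX 𝒳) := by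
        rw [hP'S]; gcongr; exact lintegral_setLIntegral_measure_predAlg_le hC P hB U hU
    _ = (c * B + n * μX 𝒳) * μX 𝒳 := by ring

lemma ofReal_one_sub_le_of_cc {α : ℝ} (hCC : CC d n μΩ C α) (P : Measure (Pt d))
    [IsProbabilityMeasure P] {𝒳 : Set (Fin d → ℝ)} (h𝒳 : MeasurableSet 𝒳) {B : ℝ≥0∞}
    (hB : ∀ x ∈ 𝒳, expectedLength P μΩ C x ≤ B) (hB_top : B ≠ ⊤)
    (h𝒳_pos : P.map Prod.fst 𝒳 ≠ 0) :
    ENNReal.ofReal (1 - α) ≤ n * P.map Prod.fst 𝒳 := by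
  have hk : ∀ k : ℕ, 0 < k →
      ENNReal.ofReal (1 - α) ≤ (k : ℝ≥0∞)⁻¹ * B + n * P.map Prod.fst 𝒳 := by
    intro k hk
    have hI : volume (Ioc (0 : ℝ) k) = k := by simp
    have := cond_isProbabilityMeasure_of_finite (μ := volume) (s := Ioc (0 : ℝ) k)
      (by simp [hI, hk.ne']) (by simp [hI])
    refine (ENNReal.mul_le_mul_iff_left h𝒳_pos (measure_ne_top _ _)).1
      (ofReal_one_sub_mul_le_of_cc hC hCC P h𝒳 hB volume[|Ioc 0 k] fun s => ?_)
    rw [cond_apply measurableSet_Ioc, hI]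
    gcongr
    exact inter_subset_right
  have hlim : Tendsto (fun k : ℕ => (k : ℝ≥0∞)⁻¹ * B + n * P.map Prod.fst 𝒳) atTop
      (𝓝 (n * P.map Prod.fst 𝒳)) := by
    simpa using (ENNReal.Tendsto.mul_const ENNReal.tendsto_inv_nat_nhds_zero
      (Or.inr hB_top)).add_const (n * P.map Prod.fst 𝒳)
  exact ge_of_tendsto hlim (eventually_atTop.2 ⟨1, fun k hk1 => hk k hk1⟩)

end Coverage

/-- **Impossibility of distribution-free conditional coverage (Vovk; Lei–Wasserman):**
if `Ĉ_n` satisfies `(1-α)`-CC with `α < 1`, then for every distribution `P`, at `P_X`-almost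
every point `x` that is not an atom of `P_X`, the expected Lebesgue measure of `Ĉ_n(x)`
(over the training data and auxiliary randomness) is infinite. -/
theorem cc_implies_infinite_length (d n : ℕ) (Ω : Type) [MeasurableSpace Ω]
    (μΩ : Measure Ω) [IsProbabilityMeasure μΩ] (α : ℝ) (hα : α < 1)
    (C : PredAlg d n Ω)
    (hC : MeasurableSet {p : ((Fin n → Pt d) × Ω × (Fin d → ℝ)) × ℝ |
      p.2 ∈ C p.1.1 p.1.2.1 p.1.2.2})
    (hCC : CC d n μΩ C α)
    (P : Measure (Pt d)) [IsProbabilityMeasure P] :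
    ∀ᵐ x ∂(P.map Prod.fst), P.map Prod.fst {x} = 0 →
      ∫⁻ q, volume (C q.1 q.2 x) ∂((Measure.pi fun _ : Fin n => P).prod μΩ) = ⊤ := by
  set μX := P.map Prod.fst
  have : IsProbabilityMeasure μX := Measure.isProbabilityMeasure_map measurable_fst.aemeasurable
  have hε : 0 < ENNReal.ofReal (1 - α) / n :=
    ENNReal.div_pos (ENNReal.ofReal_pos.2 (by linarith)).ne' (ENNReal.natCast_ne_top n)
  have hnull (B : ℕ) : μX {x ∈ {x | expectedLength P μΩ C x ≤ B} | μX {x} = 0} = 0 := by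
    refine measure_setOf_measure_singleton_eq_zero_of_forall_measure_lt
      (measurableSet_le (measurable_expectedLength hC P) measurable_const) hε
      fun s hsB hs hs_lt => ?_
    by_contra hs_pos
    have h := ofReal_one_sub_le_of_cc hC hCC P hs hsB (ENNReal.natCast_ne_top B) hs_pos
    rw [ENNReal.lt_div_iff_mul_lt (Or.inr (measure_ne_top μX s))
      (Or.inl (ENNReal.natCast_ne_top n)), mul_comm] at hs_lt
    exact hs_lt.not_ge h
  refine measure_mono_null (fun x hx => ?_) (measure_iUnion_null hnull)
  obtain ⟨hx_atom, hx_top⟩ := Classical.not_imp.1 hx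
  obtain ⟨B, hB⟩ := ENNReal.exists_nat_gt hx_top
  exact mem_iUnion.2 ⟨B, hB.le, hx_atom⟩
end
end

section
/- Let μ: ℝ^d → ℝ be measurable, α ∈ (0,1), δ ∈ (0,1], 𝔛 a collection of measurable subsets of ℝ^d, and P a distribution on ℝ^d × ℝ. Then the oracle prediction interval C*_{P,μ,α,δ}(x) = [μ(x) − q*_{P,μ,α,δ}(x), μ(x) + q*_{P,μ,α,δ}(x)] satisfies P(Y ∈ C*_{P,μ,α,δ}(X) | X ∈ 𝒳) ≥ 1−α for every 𝒳 ∈ 𝔛 with P_X(𝒳) ≥ δ, where (X,Y) ∼ P. -/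
open MeasureTheory
open scoped ENNReal

noncomputable section

open Classical in
/-- `N̂_{n1}(𝒳)`: the number of holdout points whose feature vector lies in `𝒳`. -/
def Nhat (d n1 : ℕ) (g : Fin n1 → Pt d) (𝒳 : Set (Fin d → ℝ)) : ℕ :=
  (Finset.univ.filter fun i : Fin n1 => (g i).1 ∈ 𝒳).card

/-- `𝔛̂_{n1}`: the members of `𝔛` containing sufficiently many holdout points. -/
def XhatFam (d n1 : ℕ) (𝔛 : Set (Set (Fin d → ℝ))) (δ : ℝ) (g : Fin n1 → Pt d) :
    Set (Set (Fin d → ℝ)) :=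
  {𝒳 ∈ 𝔛 |
    δ * n1 * (1 - Real.sqrt (2 * Real.log n1 / (δ * n1))) ≤ (Nhat d n1 g 𝒳 : ℝ)}

open Classical in
/-- `q̂_{n1}(𝒳)`: the `⌈(1-α+1/n1)(N̂_{n1}(𝒳)+1)⌉`-th smallest of the holdout residuals
`|Y_i - μ̂(X_i)|` over the holdout points with `X_i ∈ 𝒳` (equals `+∞` if the index exceeds
the number of such residuals). -/
def qhatSet (d n1 : ℕ) (μ : (Fin d → ℝ) → ℝ) (α : ℝ) (g : Fin n1 → Pt d)
    (𝒳 : Set (Fin d → ℝ)) : ℝ≥0∞ :=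
  kthSmallest (Finset.univ.filter fun i : Fin n1 => (g i).1 ∈ 𝒳)
    (fun i => ENNReal.ofReal |(g i).2 - μ (g i).1|)
    ⌈(1 - α + 1 / (n1 : ℝ)) * ((Nhat d n1 g 𝒳 : ℝ) + 1)⌉₊

/-- `q̂_{n1}(x)`: the supremum of `q̂_{n1}(𝒳)` over all `𝒳 ∈ 𝔛̂_{n1}` containing `x`. -/
def qhat (d n1 : ℕ) (𝔛 : Set (Set (Fin d → ℝ))) (μ : (Fin d → ℝ) → ℝ) (α δ : ℝ)
    (g : Fin n1 → Pt d) (x : Fin d → ℝ) : ℝ≥0∞ :=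
  ⨆ 𝒳 ∈ {𝒳 ∈ XhatFam d n1 𝔛 δ g | x ∈ 𝒳}, qhatSet d n1 μ α g 𝒳

/-- `q*_{P,μ,β}(𝒳)`: the `(1-β)`-quantile of `|Y - μ(X)|` under `(X,Y) ∼ P` conditional on
`X ∈ 𝒳`, valued in `ℝ≥0∞` (stated multiplicatively so no division by `P(X ∈ 𝒳)` is
needed). -/
def condQuantile (d : ℕ) (P : Measure (Pt d)) (μ : (Fin d → ℝ) → ℝ) (β : ℝ)
    (𝒳 : Set (Fin d → ℝ)) : ℝ≥0∞ :=
  sInf {t : ℝ≥0∞ |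
    ENNReal.ofReal (1 - β) * P {q | q.1 ∈ 𝒳} ≤
      P {q | q.1 ∈ 𝒳 ∧ ENNReal.ofReal |q.2 - μ q.1| ≤ t}}

/-- `q*_{P,μ,β,γ}(x)`: the supremum of `q*_{P,μ,β}(𝒳)` over all `𝒳 ∈ 𝔛` containing `x`
with `P_X(𝒳) ≥ γ`. -/
def qstar (d : ℕ) (𝔛 : Set (Set (Fin d → ℝ))) (P : Measure (Pt d))
    (μ : (Fin d → ℝ) → ℝ) (β γ : ℝ) (x : Fin d → ℝ) : ℝ≥0∞ :=
  ⨆ 𝒳 ∈ {𝒳 ∈ 𝔛 | x ∈ 𝒳 ∧ ENNReal.ofReal γ ≤ P {q | q.1 ∈ 𝒳}},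
    condQuantile d P μ β 𝒳

/-- The oracle prediction interval `C*_{P,μ,β,γ}(x) = [μ(x) - q*(x), μ(x) + q*(x)]`. -/
def oracleInterval (d : ℕ) (𝔛 : Set (Set (Fin d → ℝ))) (P : Measure (Pt d))
    (μ : (Fin d → ℝ) → ℝ) (β γ : ℝ) (x : Fin d → ℝ) : Set ℝ :=
  {y : ℝ | ENNReal.ofReal |y - μ x| ≤ qstar d 𝔛 P μ β γ x}


open Filter Topology in
lemma condQuantile_achieved (d : ℕ) (P : Measure (Pt d)) [IsFiniteMeasure P]
    (μ : (Fin d → ℝ) → ℝ) (hμ : Measurable μ) (β : ℝ) (hβ1 : 1 - β ≤ 1)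
    (𝒳 : Set (Fin d → ℝ)) (h𝒳 : MeasurableSet 𝒳) :
    ENNReal.ofReal (1 - β) * P {q | q.1 ∈ 𝒳} ≤
      P {q | q.1 ∈ 𝒳 ∧ ENNReal.ofReal |q.2 - μ q.1| ≤ condQuantile d P μ β 𝒳} := by
  set c : ℝ≥0∞ := ENNReal.ofReal (1 - β) * P {q | q.1 ∈ 𝒳} with hc
  set S : Set ℝ≥0∞ := {t | c ≤ P {q | q.1 ∈ 𝒳 ∧ ENNReal.ofReal |q.2 - μ q.1| ≤ t}} with hS
  have hA : ∀ t : ℝ≥0∞,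
      MeasurableSet {q : Pt d | q.1 ∈ 𝒳 ∧ ENNReal.ofReal |q.2 - μ q.1| ≤ t} := by
    intro t
    have h1 : MeasurableSet {q : Pt d | q.1 ∈ 𝒳} := measurable_fst h𝒳
    have h2 : Measurable fun q : Pt d => ENNReal.ofReal |q.2 - μ q.1| :=
      (measurable_snd.sub (hμ.comp measurable_fst)).abs.ennreal_ofReal
    exact h1.inter (h2 measurableSet_Iic)
  have htop : (⊤ : ℝ≥0∞) ∈ S := by
    simp only [hS, Set.mem_setOf_eq, le_top, and_true]
    calc c ≤ 1 * P {q | q.1 ∈ 𝒳} := by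
          rw [hc]; gcongr; exact ENNReal.ofReal_le_one.mpr hβ1
      _ = _ := one_mul _
  obtain ⟨u, hu_anti, hu_tendsto, hu_mem⟩ :=
    exists_seq_tendsto_sInf ⟨⊤, htop⟩ (OrderBot.bddBelow S)
  have hiInf : ⨅ n, u n = sInf S := by
    exact tendsto_nhds_unique (tendsto_atTop_iInf hu_anti) hu_tendsto
  have hInter : (⋂ n, {q : Pt d | q.1 ∈ 𝒳 ∧ ENNReal.ofReal |q.2 - μ q.1| ≤ u n}) =
      {q : Pt d | q.1 ∈ 𝒳 ∧ ENNReal.ofReal |q.2 - μ q.1| ≤ sInf S} := by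
    ext q
    simp only [Set.mem_iInter, Set.mem_setOf_eq, ← hiInf, le_iInf_iff]
    constructor
    · intro h
      exact ⟨(h 0).1, fun n => (h n).2⟩
    · intro h n
      exact ⟨h.1, h.2 n⟩
  have htend := tendsto_measure_iInter_atTop (μ := P)
    (fun n => (hA (u n)).nullMeasurableSet)
    (fun m n h => Set.setOf_subset_setOf.mpr fun q hq => ⟨hq.1, hq.2.trans (hu_anti h)⟩)
    ⟨0, measure_ne_top _ _⟩
  rw [hInter] at htend
  have : c ≤ P {q : Pt d | q.1 ∈ 𝒳 ∧ ENNReal.ofReal |q.2 - μ q.1| ≤ sInf S} :=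
    ge_of_tendsto htend (Filter.Eventually.of_forall fun n => hu_mem n)
  simpa [condQuantile, hS, hc] using this

/-- **Coverage of the oracle interval:** `C*_{P,μ,α,δ}(x)` satisfies
`P(Y ∈ C*_{P,μ,α,δ}(X) | X ∈ 𝒳) ≥ 1 - α` for every `𝒳 ∈ 𝔛` with `P_X(𝒳) ≥ δ`. -/
theorem oracle_interval_coverage (d : ℕ) (α δ : ℝ)
    (hα : α ∈ Set.Ioo (0 : ℝ) 1) (hδ : δ ∈ Set.Ioc (0 : ℝ) 1)
    (𝔛 : Set (Set (Fin d → ℝ))) (h𝔛meas : ∀ S ∈ 𝔛, MeasurableSet S)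
    (μ : (Fin d → ℝ) → ℝ) (hμ : Measurable μ)
    (P : Measure (Pt d)) [IsProbabilityMeasure P]
    (𝒳 : Set (Fin d → ℝ)) (h𝒳 : 𝒳 ∈ 𝔛)
    (hδ𝒳 : ENNReal.ofReal δ ≤ P {q | q.1 ∈ 𝒳}) :
    ENNReal.ofReal (1 - α) * P {q | q.1 ∈ 𝒳} ≤
      P {q | q.1 ∈ 𝒳 ∧ q.2 ∈ oracleInterval d 𝔛 P μ α δ q.1} := by
  have key := condQuantile_achieved d P μ hμ α (by linarith [hα.1]) 𝒳 (h𝔛meas 𝒳 h𝒳)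
  refine key.trans (measure_mono ?_)
  rintro ⟨x, y⟩ ⟨hx, hy⟩
  refine ⟨hx, ?_⟩
  refine hy.trans ?_
  exact le_biSup _ (show 𝒳 ∈ {𝒳' ∈ 𝔛 | x ∈ 𝒳' ∧ ENNReal.ofReal δ ≤ P {q | q.1 ∈ 𝒳'}}
    from ⟨h𝒳, hx, hδ𝒳⟩)
end
end

section
/- Let 𝔛 be any collection of measurable subsets of ℝ^d, let c: 𝔛 → ℝ be any function, and let f: ℝ^d × ℝ → ℝ be any fixed function. For each 𝒳 ∈ 𝔛 define the set 𝒳̃ = {(x,y) ∈ ℝ^d × ℝ : x ∈ 𝒳 and f(x,y) > c(𝒳)}. Then VC({𝒳̃ : 𝒳 ∈ 𝔛}) ≤ VC(𝔛) + 1. -/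
/-!
Let `A` be a finite set shattered by the residual class and let `p₀ ∈ A` minimise `f`. Any
residual set `𝒳̃` containing `p₀` has `c 𝒳 < f p₀ ≤ f q` for every `q ∈ A`, so on `A` it is cut
out by the condition `q.1 ∈ 𝒳` alone. Hence the traces of the sets `𝒳̃ ∋ p₀` on `A \ {p₀}` are
the pullbacks of the traces of `𝔛` on the projection of `A \ {p₀}`, which is therefore shattered
by `𝔛`. The same comparison applied to two points with the same first coordinate shows that the
projection is injective on `A`, so `#A - 1 ≤ VC(𝔛)`.
-/

noncomputable section

/-- `F` shatters `A` if every subset of `A` is cut out by a member of `F`. -/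
def Shatters {S : Type*} (F : Set (Set S)) (A : Set S) : Prop :=
  ∀ B ⊆ A, ∃ T ∈ F, T ∩ A = B

/-- The Vapnik–Chervonenkis dimension of a collection of sets, valued in `ℕ∞`:
the supremum of the cardinalities of finite shattered sets. -/
def VCdim {S : Type*} (F : Set (Set S)) : ℕ∞ :=
  ⨆ (A : Finset S) (_ : Shatters F (A : Set S)), (A.card : ℕ∞)

theorem Shatters.exists_mem_not_mem {S : Type*} {F : Set (Set S)} {A : Set S}
    (hA : Shatters F A) {p q : S} (hp : p ∈ A) (hq : q ∈ A) (hpq : p ≠ q) :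
    ∃ T ∈ F, p ∈ T ∧ q ∉ T := by
  obtain ⟨T, hT, hTA⟩ := hA {p} (Set.singleton_subset_iff.2 hp)
  have hpT : p ∈ T ∩ A := hTA ▸ rfl
  exact ⟨T, hT, hpT.1, fun hqT => hpq (hTA ▸ ⟨hqT, hq⟩ : q ∈ ({p} : Set S)).symm⟩

theorem card_le_VCdim {S : Type*} {F : Set (Set S)} {A : Finset S} (hA : Shatters F A) :
    (A.card : ℕ∞) ≤ VCdim F :=
  le_iSup₂_of_le A hA le_rfl

section Residual

variable {α β γ : Type*} [LinearOrder γ]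

def residualSet (c : Set α → γ) (f : α × β → γ) (X : Set α) : Set (α × β) :=
  {p | p.1 ∈ X ∧ c X < f p}

def residualClass (𝔛 : Set (Set α)) (c : Set α → γ) (f : α × β → γ) : Set (Set (α × β)) :=
  {T | ∃ X ∈ 𝔛, T = residualSet c f X}

variable {𝔛 : Set (Set α)} {c : Set α → γ} {f : α × β → γ}

theorem mem_residualSet_iff_of_le {X : Set α} {p q : α × β} (hp : p ∈ residualSet c f X)
    (hpq : f p ≤ f q) : q ∈ residualSet c f X ↔ q.1 ∈ X :=
  ⟨And.left, fun hq => ⟨hq, hp.2.trans_le hpq⟩⟩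

theorem Shatters.injOn_fst_of_residualClass {A : Set (α × β)}
    (hA : Shatters (residualClass 𝔛 c f) A) : A.InjOn Prod.fst := by
  intro p hp q hq hpq
  by_contra hne
  wlog hfpq : f p ≤ f q generalizing p q
  · exact this hq hp hpq.symm (Ne.symm hne) (le_of_not_ge hfpq)
  obtain ⟨T, ⟨X, -, rfl⟩, hpT, hqT⟩ := hA.exists_mem_not_mem hp hq hne
  exact hqT ((mem_residualSet_iff_of_le hpT hfpq).2 (hpq ▸ hpT.1))

theorem Shatters.image_fst_diff_of_residualClass {A : Set (α × β)}
    (hA : Shatters (residualClass 𝔛 c f) A) {p₀ : α × β} (hp₀ : p₀ ∈ A)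
    (hmin : ∀ q ∈ A, f p₀ ≤ f q) : Shatters 𝔛 (Prod.fst '' (A \ {p₀})) := by
  intro B hB
  have hC : insert p₀ (A ∩ Prod.fst ⁻¹' B) ⊆ A :=
    Set.insert_subset hp₀ Set.inter_subset_left
  obtain ⟨T, ⟨X, hX, rfl⟩, hXA⟩ := hA _ hC
  have hp₀X : p₀ ∈ residualSet c f X := (hXA.symm ▸ Set.mem_insert p₀ _ : p₀ ∈ _ ∩ A).1
  have hmemC {q : α × β} (hq : q ∈ A) : q.1 ∈ X ↔ q ∈ insert p₀ (A ∩ Prod.fst ⁻¹' B) := by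
    rw [← hXA, ← mem_residualSet_iff_of_le hp₀X (hmin q hq)]
    exact (and_iff_left hq).symm
  refine ⟨X, hX, Set.ext fun x => ⟨?_, fun hxB => ⟨?_, hB hxB⟩⟩⟩
  · rintro ⟨hxX, q, ⟨hqA, hqp₀⟩, rfl⟩
    rcases (hmemC hqA).1 hxX with rfl | ⟨-, hqB⟩
    · exact absurd rfl hqp₀
    · exact hqB
  · obtain ⟨q, ⟨hqA, -⟩, rfl⟩ := hB hxB
    exact (hmemC hqA).2 (Or.inr ⟨hqA, hxB⟩)

theorem VCdim_residualClass_le : VCdim (residualClass 𝔛 c f) ≤ VCdim 𝔛 + 1 := by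
  classical
  refine iSup₂_le fun A hA => ?_
  obtain rfl | hne := A.eq_empty_or_nonempty
  · simp
  obtain ⟨p₀, hp₀, hmin⟩ := A.exists_min_image f hne
  have hshatters : Shatters 𝔛 ↑((A.erase p₀).image Prod.fst) := by
    rw [Finset.coe_image, Finset.coe_erase]
    exact hA.image_fst_diff_of_residualClass hp₀ hmin
  have hcard : A.card = ((A.erase p₀).image Prod.fst).card + 1 := by
    rw [Finset.card_image_of_injOn (hA.injOn_fst_of_residualClass.mono (A.erase_subset p₀)),
      Finset.card_erase_add_one hp₀]
  calc (A.card : ℕ∞) = ((A.erase p₀).image Prod.fst).card + 1 := by rw [hcard, Nat.cast_succ]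
    _ ≤ VCdim 𝔛 + 1 := by gcongr; exact card_le_VCdim hshatters

end Residual

/-- **Lemma (VC dimension of residual-threshold classes):** for any collection `𝔛` of
subsets of `ℝ^d`, any threshold function `c : 𝔛 → ℝ`, and any fixed `f : ℝ^d × ℝ → ℝ`, the
collection of sets `𝒳̃ = {(x,y) : x ∈ 𝒳, f(x,y) > c(𝒳)}`, `𝒳 ∈ 𝔛`, has VC dimension at
most `VC(𝔛) + 1`. -/
theorem vcdim_residual_class_le (d : ℕ) (𝔛 : Set (Set (Fin d → ℝ)))
    (c : Set (Fin d → ℝ) → ℝ) (f : (Fin d → ℝ) × ℝ → ℝ) :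
    VCdim {T : Set ((Fin d → ℝ) × ℝ) |
        ∃ 𝒳 ∈ 𝔛, T = {p : (Fin d → ℝ) × ℝ | p.1 ∈ 𝒳 ∧ c 𝒳 < f p}} ≤
      VCdim 𝔛 + 1 :=
  VCdim_residualClass_le
end
end

section
/- For any distribution P on ℝ^d × ℝ, the map β ↦ L_P(1−β) is convex on [0,1]. -/
open MeasureTheory
open scoped ENNReal

noncomputable section

/-- `LP d P t` is the shortest possible expected length `L_P(t)` of a (possibly randomized)
prediction interval with marginal coverage at least `t` under `P`: the infimum of
`E[leb(C(X))]` over all randomized maps `C` (with auxiliary randomness from an arbitrary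
probability space `Ω'`) satisfying `P(Y ∈ C(X)) ≥ t` for `(X,Y) ∼ P`. -/
def LP (d : ℕ) (P : Measure (Pt d)) (t : ℝ) : ℝ≥0∞ :=
  sInf {r : ℝ≥0∞ |
    ∃ (Ω' : Type) (_ : MeasurableSpace Ω') (μ' : Measure Ω'),
      IsProbabilityMeasure μ' ∧
      ∃ C : (Fin d → ℝ) → Ω' → Set ℝ,
        MeasurableSet {p : ((Fin d → ℝ) × Ω') × ℝ | p.2 ∈ C p.1.1 p.1.2} ∧
        ENNReal.ofReal t ≤ (P.prod μ') {q : Pt d × Ω' | q.1.2 ∈ C q.1.1 q.2} ∧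
        r = ∫⁻ q, volume (C q.1 q.2) ∂((P.map Prod.fst).prod μ')}

/-! Randomized sets achieving levels `s₁` and `s₂` can be mixed by an independent coin of bias
`t`: take the disjoint union of the two randomization spaces with the mixture of their laws.
Coverage and expected length are both linear in the randomization law, so the mixed set has
level `(1 - t) s₁ + t s₂` and expected length the same combination of the two lengths;
taking infima gives convexity of `β ↦ L_P(1 - β)`. -/

namespace MeasureTheory.Measure

variable {α Ω₁ Ω₂ : Type*} [MeasurableSpace α] [MeasurableSpace Ω₁] [MeasurableSpace Ω₂]

def mixture (a b : ℝ≥0∞) (ν₁ : Measure Ω₁) (ν₂ : Measure Ω₂) : Measure (Ω₁ ⊕ Ω₂) :=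
  a • ν₁.map Sum.inl + b • ν₂.map Sum.inr

theorem isProbabilityMeasure_mixture {a b : ℝ≥0∞} (hab : a + b = 1) (ν₁ : Measure Ω₁)
    (ν₂ : Measure Ω₂) [IsProbabilityMeasure ν₁] [IsProbabilityMeasure ν₂] :
    IsProbabilityMeasure (mixture a b ν₁ ν₂) :=
  ⟨by simp [mixture, map_apply measurable_inl, map_apply measurable_inr, hab]⟩

variable (μ : Measure α) [SFinite μ] (a b : ℝ≥0∞) (ν₁ : Measure Ω₁) (ν₂ : Measure Ω₂)
  [SFinite ν₁] [SFinite ν₂]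

theorem prod_mixture :
    μ.prod (mixture a b ν₁ ν₂) =
      a • (μ.prod ν₁).map (Prod.map id Sum.inl) + b • (μ.prod ν₂).map (Prod.map id Sum.inr) := by
  rw [mixture, prod_add, prod_smul_right, prod_smul_right,
    ← map_prod_map _ _ measurable_id measurable_inl,
    ← map_prod_map _ _ measurable_id measurable_inr, map_id]

theorem prod_mixture_apply {s : Set (α × (Ω₁ ⊕ Ω₂))} (hs : MeasurableSet s) :
    μ.prod (mixture a b ν₁ ν₂) s =
      a * μ.prod ν₁ (Prod.map id Sum.inl ⁻¹' s) + b * μ.prod ν₂ (Prod.map id Sum.inr ⁻¹' s) := by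
  simp [prod_mixture, map_apply (measurable_id.prodMap measurable_inl) hs,
    map_apply (measurable_id.prodMap measurable_inr) hs]

theorem lintegral_prod_mixture {f : α × (Ω₁ ⊕ Ω₂) → ℝ≥0∞} (hf : Measurable f) :
    ∫⁻ z, f z ∂μ.prod (mixture a b ν₁ ν₂) =
      a * ∫⁻ z, f (z.1, Sum.inl z.2) ∂μ.prod ν₁ + b * ∫⁻ z, f (z.1, Sum.inr z.2) ∂μ.prod ν₂ := by
  rw [prod_mixture, lintegral_add_measure, lintegral_smul_measure, lintegral_smul_measure,
    lintegral_map hf (measurable_id.prodMap measurable_inl),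
    lintegral_map hf (measurable_id.prodMap measurable_inr)]
  rfl

end MeasureTheory.Measure

theorem measurableSet_mem_sumElim {X Y Ω₁ Ω₂ : Type*} [MeasurableSpace X] [MeasurableSpace Y]
    [MeasurableSpace Ω₁] [MeasurableSpace Ω₂] {C₁ : X → Ω₁ → Set Y} {C₂ : X → Ω₂ → Set Y}
    (h₁ : MeasurableSet {p : (X × Ω₁) × Y | p.2 ∈ C₁ p.1.1 p.1.2})
    (h₂ : MeasurableSet {p : (X × Ω₂) × Y | p.2 ∈ C₂ p.1.1 p.1.2}) :
    MeasurableSet {p : (X × (Ω₁ ⊕ Ω₂)) × Y | p.2 ∈ Sum.elim (C₁ p.1.1) (C₂ p.1.1) p.1.2} := by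
  let e := ((MeasurableEquiv.prodSumDistrib X Ω₁ Ω₂).prodCongr (MeasurableEquiv.refl Y)).trans
    (MeasurableEquiv.sumProdDistrib _ _ _)
  have : {p : (X × (Ω₁ ⊕ Ω₂)) × Y | p.2 ∈ Sum.elim (C₁ p.1.1) (C₂ p.1.1) p.1.2} =
      e ⁻¹' {z | Sum.elim (fun p => p.2 ∈ C₁ p.1.1 p.1.2) (fun p => p.2 ∈ C₂ p.1.1 p.1.2) z} := by
    ext ⟨⟨x, ω | ω⟩, y⟩ <;> rfl
  rw [this]
  exact e.measurable (measurableSet_sum_iff.2 ⟨h₁, h₂⟩)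

theorem ENNReal.le_mul_sInf_add_mul_sInf {x a b : ℝ≥0∞} {s t : Set ℝ≥0∞} (ha₀ : a ≠ 0)
    (ha : a ≠ ∞) (hb₀ : b ≠ 0) (hb : b ≠ ∞) (h : ∀ r ∈ s, ∀ q ∈ t, x ≤ a * r + b * q) :
    x ≤ a * sInf s + b * sInf t := by
  simp_rw [sInf_eq_iInf, ENNReal.mul_iInf_of_ne ha₀ ha, ENNReal.mul_iInf_of_ne hb₀ hb]
  exact ENNReal.le_iInf₂_add_iInf₂ h

def feasibleLengths (d : ℕ) (P : Measure (Pt d)) (t : ℝ) : Set ℝ≥0∞ :=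
  {r : ℝ≥0∞ |
    ∃ (Ω' : Type) (_ : MeasurableSpace Ω') (μ' : Measure Ω'),
      IsProbabilityMeasure μ' ∧
      ∃ C : (Fin d → ℝ) → Ω' → Set ℝ,
        MeasurableSet {p : ((Fin d → ℝ) × Ω') × ℝ | p.2 ∈ C p.1.1 p.1.2} ∧
        ENNReal.ofReal t ≤ (P.prod μ') {q : Pt d × Ω' | q.1.2 ∈ C q.1.1 q.2} ∧
        r = ∫⁻ q, volume (C q.1 q.2) ∂((P.map Prod.fst).prod μ')}

theorem LP_eq_sInf_feasibleLengths (d : ℕ) (P : Measure (Pt d)) (t : ℝ) :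
    LP d P t = sInf (feasibleLengths d P t) :=
  rfl

theorem mix_mem_feasibleLengths {d : ℕ} {P : Measure (Pt d)} [SFinite P] {a b s₁ s₂ : ℝ}
    {r₁ r₂ : ℝ≥0∞} (ha : 0 ≤ a) (hb : 0 ≤ b) (hab : a + b = 1)
    (h₁ : r₁ ∈ feasibleLengths d P s₁) (h₂ : r₂ ∈ feasibleLengths d P s₂) :
    ENNReal.ofReal a * r₁ + ENNReal.ofReal b * r₂ ∈ feasibleLengths d P (a * s₁ + b * s₂) := by
  obtain ⟨Ω₁, _, μ₁, _, C₁, hC₁, hcov₁, rfl⟩ := h₁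
  obtain ⟨Ω₂, _, μ₂, _, C₂, hC₂, hcov₂, rfl⟩ := h₂
  have hC := measurableSet_mem_sumElim hC₁ hC₂
  have hab' : ENNReal.ofReal a + ENNReal.ofReal b = 1 := by
    rw [← ENNReal.ofReal_add ha hb, hab, ENNReal.ofReal_one]
  have hcover : MeasurableSet {q : Pt d × (Ω₁ ⊕ Ω₂) | q.1.2 ∈ Sum.elim (C₁ q.1.1) (C₂ q.1.1) q.2} :=
    hC.preimage (f := fun q : Pt d × (Ω₁ ⊕ Ω₂) => ((q.1.1, q.2), q.1.2)) (by fun_prop)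
  refine ⟨Ω₁ ⊕ Ω₂, inferInstance, .mixture (.ofReal a) (.ofReal b) μ₁ μ₂,
    Measure.isProbabilityMeasure_mixture hab' μ₁ μ₂, fun x => Sum.elim (C₁ x) (C₂ x), hC, ?_, ?_⟩
  · rw [Measure.prod_mixture_apply _ _ _ _ _ hcover]
    calc ENNReal.ofReal (a * s₁ + b * s₂)
        ≤ ENNReal.ofReal a * ENNReal.ofReal s₁ + ENNReal.ofReal b * ENNReal.ofReal s₂ := by
          rw [← ENNReal.ofReal_mul ha, ← ENNReal.ofReal_mul hb]
          exact ENNReal.ofReal_add_le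
      _ ≤ _ := by gcongr; exacts [hcov₁, hcov₂]
  · exact (Measure.lintegral_prod_mixture _ _ _ _ _ (measurable_measure_prodMk_left hC)).symm

theorem LP_convex_general (d : ℕ) (P : Measure (Pt d)) [IsProbabilityMeasure P]
    (β₁ β₂ t : ℝ) (ht : t ∈ Set.Icc (0 : ℝ) 1) :
    LP d P (1 - ((1 - t) * β₁ + t * β₂)) ≤
      ENNReal.ofReal (1 - t) * LP d P (1 - β₁) + ENNReal.ofReal t * LP d P (1 - β₂) := by
  obtain ⟨ht₀, ht₁⟩ := ht
  -- At `t = 0` or `t = 1` a weight vanishes, and `0 * ∞ = 0` defeats the mixing bound.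
  rcases ht₀.eq_or_lt with rfl | ht₀
  · simp
  rcases ht₁.eq_or_lt with rfl | ht₁
  · simp
  rw [show 1 - ((1 - t) * β₁ + t * β₂) = (1 - t) * (1 - β₁) + t * (1 - β₂) by ring]
  simp only [LP_eq_sInf_feasibleLengths]
  refine ENNReal.le_mul_sInf_add_mul_sInf (by simpa using ht₁) ENNReal.ofReal_ne_top
    (by simpa using ht₀) ENNReal.ofReal_ne_top fun r₁ h₁ r₂ h₂ => sInf_le ?_
  exact mix_mem_feasibleLengths (by linarith) ht₀.le (by ring) h₁ h₂

/-- **Convexity of the optimal-length function:** for any distribution `P` on `ℝ^d × ℝ`,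
the map `β ↦ L_P(1-β)` is convex on `[0,1]`. -/
theorem LP_convex (d : ℕ) (P : Measure (Pt d)) [IsProbabilityMeasure P]
    (β₁ β₂ t : ℝ) (hβ₁ : β₁ ∈ Set.Icc (0 : ℝ) 1) (hβ₂ : β₂ ∈ Set.Icc (0 : ℝ) 1)
    (ht : t ∈ Set.Icc (0 : ℝ) 1) :
    LP d P (1 - ((1 - t) * β₁ + t * β₂)) ≤
      ENNReal.ofReal (1 - t) * LP d P (1 - β₁) + ENNReal.ofReal t * LP d P (1 - β₂) :=
  LP_convex_general d P β₁ β₂ t ht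
end
end
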